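/- arXiv:2605.12426 — 7 statements merged into one kernel-verified Lean document; each statement's English description precedes it below -/
import Mathlib

section
/- For every natural number k ≥ 2 there exist vectors v_1, …, v_k ∈ {−1, 1}^d with d = ⌈4·log₂ k⌉ such that for all i ≠ j one has |⟨v_i, v_j⟩| ≤ 3·log₂ k. -/
/-!
Greedy choice: pick sign vectors one at a time, each far (`|⟨u, w⟩| ≤ 3 log₂ k`) from all those
already chosen. This cannot get stuck before `k` steps because of the exponential moment
`∑_w 2 ^ ⟨u, w⟩ = (5/2) ^ d` over `w ∈ {±1}^d`: by Markov, at most `2 (5/2)^d / k³` sign vectors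
are close to a given `u`, and since `2 ^ d < 2 k⁴` the neighbourhoods of `k - 1` chosen vectors
cannot cover all `2 ^ d` sign vectors.
-/

open Finset Real

theorem Finset.exists_subset_card_eq_pairwise_not {α : Type*} [DecidableEq α] {U : Finset α}
    {r : α → α → Prop} [DecidableRel r] (hsymm : ∀ u w, r u w → r w u)
    (hrefl : ∀ u ∈ U, r u u) (hU : U.Nonempty) {k : ℕ}
    (hk : ∀ u ∈ U, (k - 1) * #{w ∈ U | r u w} < #U) :
    ∃ S ⊆ U, #S = k ∧ (S : Set α).Pairwise fun u w => ¬ r u w := by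
  suffices ∀ n ≤ k, ∃ S ⊆ U, #S = n ∧ (S : Set α).Pairwise fun u w => ¬ r u w from
    this k le_rfl
  intro n
  induction n with
  | zero => exact fun _ => ⟨∅, empty_subset U, card_empty, by simp⟩
  | succ n ih =>
    intro hn
    obtain ⟨S, hSU, hScard, hS⟩ := ih (by omega)
    have hnear : #(S.biUnion fun u => {w ∈ U | r u w}) < #U := by
      refine card_biUnion_le.trans_lt ?_
      rcases S.eq_empty_or_nonempty with rfl | hSne
      · simpa using hU.card_pos
      refine lt_of_mul_lt_mul_left ?_ (Nat.zero_le (k - 1))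
      calc (k - 1) * ∑ u ∈ S, #{w ∈ U | r u w} = ∑ u ∈ S, (k - 1) * #{w ∈ U | r u w} :=
            mul_sum ..
        _ < ∑ _u ∈ S, #U := sum_lt_sum_of_nonempty hSne fun u hu => hk u (hSU hu)
        _ ≤ (k - 1) * #U := by rw [sum_const, hScard, smul_eq_mul]; gcongr; omega
    obtain ⟨w, hwU, hw⟩ := exists_mem_notMem_of_card_lt_card hnear
    have hfar : ∀ u ∈ S, ¬ r u w := fun u hu hr =>
      hw (mem_biUnion.mpr ⟨u, hu, mem_filter.mpr ⟨hwU, hr⟩⟩)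
    have hwS : w ∉ S := fun h => hfar w h (hrefl w hwU)
    refine ⟨insert w S, insert_subset hwU hSU, by rw [card_insert_of_notMem hwS, hScard], ?_⟩
    rw [coe_insert]
    exact hS.insert fun u hu _ => ⟨fun h => hfar u hu (hsymm _ _ h), hfar u hu⟩

theorem two_mul_pred_mul_five_pow_lt {k d : ℕ} (hk : 2 ≤ k) (hd : 2 ^ d < 2 * k ^ 4) :
    2 * (k - 1) * 5 ^ d < 4 ^ d * k ^ 3 := by
  have hk5 : 16 * (k - 1) ^ 3 ≤ k ^ 5 := by
    rcases le_or_gt k 3 with h | h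
    · interval_cases k <;> norm_num
    · have : 16 ≤ k ^ 2 := by nlinarith
      calc 16 * (k - 1) ^ 3 ≤ k ^ 2 * k ^ 3 := by gcongr; omega
        _ = k ^ 5 := by ring
  refine lt_of_pow_lt_pow_left₀ 3 (Nat.zero_le _) ?_
  calc (2 * (k - 1) * 5 ^ d) ^ 3 = 8 * (k - 1) ^ 3 * (5 ^ 3) ^ d := by
        rw [pow_right_comm]; ring
    _ ≤ 8 * (k - 1) ^ 3 * (2 ^ d * (4 ^ 3) ^ d) := by
        rw [← mul_pow]; gcongr; norm_num
    _ < 8 * (k - 1) ^ 3 * (2 * k ^ 4 * (4 ^ 3) ^ d) := by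
        have : 0 < k - 1 := by omega
        gcongr
    _ = 16 * (k - 1) ^ 3 * k ^ 4 * (4 ^ 3) ^ d := by ring
    _ ≤ k ^ 5 * k ^ 4 * (4 ^ 3) ^ d := by gcongr
    _ = (4 ^ d * k ^ 3) ^ 3 := by rw [pow_right_comm]; ring

noncomputable def signVectors (ι : Type*) [Fintype ι] [DecidableEq ι] : Finset (ι → ℝ) :=
  Fintype.piFinset fun _ => {1, -1}

section signVectors

variable {ι : Type*} [Fintype ι] [DecidableEq ι] {u : ι → ℝ}

theorem mem_signVectors : u ∈ signVectors ι ↔ ∀ t, u t = 1 ∨ u t = -1 := by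
  simp [signVectors]

theorem signVectors_nonempty : (signVectors ι).Nonempty :=
  ⟨1, mem_signVectors.mpr fun _ => Or.inl rfl⟩

theorem card_signVectors : #(signVectors ι) = 2 ^ Fintype.card ι := by
  simp [signVectors, card_pair (show (1 : ℝ) ≠ -1 by norm_num)]

theorem dotProduct_self_of_mem_signVectors (hu : u ∈ signVectors ι) :
    u ⬝ᵥ u = Fintype.card ι := by
  have hsq (t) : u t * u t = 1 := by
    rcases mem_signVectors.mp hu t with h | h <;> simp [h]
  simp [dotProduct, hsq]

theorem sum_signVectors_exp_dotProduct (hu : u ∈ signVectors ι) (c : ℝ) :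
    ∑ w ∈ signVectors ι, exp (c * (u ⬝ᵥ w)) = (2 * cosh c) ^ Fintype.card ι := by
  have hpair (t) : ∑ b ∈ ({1, -1} : Finset ℝ), exp (c * (u t * b)) = 2 * cosh c := by
    rw [sum_pair (by norm_num), ← cosh_abs c, cosh_eq]
    rcases mem_signVectors.mp hu t with h | h <;> rcases abs_choice c with hc | hc <;>
      simp only [h, hc] <;> ring_nf
  calc ∑ w ∈ signVectors ι, exp (c * (u ⬝ᵥ w))
      = ∏ t, ∑ b ∈ ({1, -1} : Finset ℝ), exp (c * (u t * b)) := by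
        simp_rw [prod_univ_sum, dotProduct, mul_sum, exp_sum]
        rfl
    _ = (2 * cosh c) ^ Fintype.card ι := by simp [hpair]

theorem card_filter_lt_abs_dotProduct_mul_exp_le (hu : u ∈ signVectors ι) {c : ℝ}
    (hc : 0 ≤ c) (a : ℝ) :
    #{w ∈ signVectors ι | a < |u ⬝ᵥ w|} * exp (c * a) ≤
      2 * (2 * cosh c) ^ Fintype.card ι := by
  calc (#{w ∈ signVectors ι | a < |u ⬝ᵥ w|} : ℝ) * exp (c * a)
      ≤ ∑ w ∈ {w ∈ signVectors ι | a < |u ⬝ᵥ w|}, exp (c * |u ⬝ᵥ w|) := by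
        rw [← nsmul_eq_mul]
        exact card_nsmul_le_sum _ _ _ fun w hw => exp_le_exp.mpr
          (mul_le_mul_of_nonneg_left (mem_filter.mp hw).2.le hc)
    _ ≤ ∑ w ∈ signVectors ι, (exp (c * (u ⬝ᵥ w)) + exp (-c * (u ⬝ᵥ w))) := by
        refine (sum_le_sum fun w _ => ?_).trans
          (sum_le_sum_of_subset_of_nonneg (filter_subset _ _) fun w _ _ => by positivity)
        have := exp_abs_le (c * (u ⬝ᵥ w))
        rwa [abs_mul, abs_of_nonneg hc, ← neg_mul] at this
    _ = 2 * (2 * cosh c) ^ Fintype.card ι := by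
        rw [sum_add_distrib, sum_signVectors_exp_dotProduct hu, sum_signVectors_exp_dotProduct hu,
          cosh_neg]
        ring

theorem card_filter_three_logb_lt_abs_dotProduct_mul_le (hu : u ∈ signVectors ι) {k : ℕ}
    (hk : 0 < k) :
    #{w ∈ signVectors ι | 3 * logb 2 k < |u ⬝ᵥ w|} * (2 ^ Fintype.card ι * k ^ 3) ≤
      2 * 5 ^ Fintype.card ι := by
  have hexp : exp (log 2 * (3 * logb 2 k)) = (k : ℝ) ^ 3 := by
    rw [← rpow_def_of_pos two_pos, mul_comm, rpow_mul zero_le_two,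
      rpow_logb two_pos (by norm_num) (by positivity)]
    norm_cast
  have hcosh : 2 * cosh (log 2) = 5 / 2 := by
    rw [cosh_log two_pos]
    norm_num
  have hchernoff :=
    card_filter_lt_abs_dotProduct_mul_exp_le hu (log_nonneg one_le_two) (3 * logb 2 k)
  rw [hexp, hcosh, div_pow, mul_div_assoc', le_div_iff₀ (by positivity)] at hchernoff
  rw [← Nat.cast_le (α := ℝ)]
  push_cast
  linarith

theorem pred_mul_card_filter_three_logb_lt_abs_dotProduct_lt (hu : u ∈ signVectors ι) {k : ℕ}
    (hk : 2 ≤ k) (hd : 2 ^ Fintype.card ι < 2 * k ^ 4) :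
    (k - 1) * #{w ∈ signVectors ι | 3 * logb 2 k < |u ⬝ᵥ w|} < 2 ^ Fintype.card ι := by
  refine Nat.lt_of_mul_lt_mul_right (a := 2 ^ Fintype.card ι * k ^ 3) ?_
  calc _ ≤ (k - 1) * (2 * 5 ^ Fintype.card ι) := by
        rw [mul_assoc]
        exact Nat.mul_le_mul_left _ (card_filter_three_logb_lt_abs_dotProduct_mul_le hu (by omega))
    _ = 2 * (k - 1) * 5 ^ Fintype.card ι := by ring
    _ < 4 ^ Fintype.card ι * k ^ 3 := two_mul_pred_mul_five_pow_lt hk hd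
    _ = 2 ^ Fintype.card ι * (2 ^ Fintype.card ι * k ^ 3) := by
        rw [show 4 = 2 * 2 from rfl, mul_pow, mul_assoc]

end signVectors

theorem two_pow_ceil_four_mul_logb_lt {k : ℕ} (hk : 0 < k) :
    2 ^ ⌈4 * logb 2 k⌉₊ < 2 * k ^ 4 := by
  have hL : 0 ≤ logb 2 k := logb_nonneg one_lt_two (by exact_mod_cast hk)
  have hk4 : (2 : ℝ) ^ (4 * logb 2 k) = k ^ 4 := by
    rw [mul_comm, rpow_mul zero_le_two, rpow_logb two_pos (by norm_num) (by positivity)]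
    norm_cast
  have : (2 : ℝ) ^ (⌈4 * logb 2 k⌉₊ : ℝ) < 2 ^ (4 * logb 2 k + 1) :=
    rpow_lt_rpow_of_exponent_lt one_lt_two (Nat.ceil_lt_add_one (by positivity))
  rw [rpow_natCast, rpow_add_one two_ne_zero, hk4] at this
  exact_mod_cast this.trans_eq (mul_comm _ _)

/-- **Near-orthogonal sign vectors.** For every `k ≥ 2` there exist vectors
`v 1, …, v k ∈ {−1,1}^d` with `d = ⌈4·log₂ k⌉` such that for all `i ≠ j`,
`|⟨v i, v j⟩| ≤ 3·log₂ k`. -/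
theorem near_orthogonal_sign_vectors (k : ℕ) (hk : 2 ≤ k) :
    ∃ v : Fin k → Fin ⌈(4 : ℝ) * Real.logb 2 k⌉₊ → ℝ,
      (∀ i t, v i t = 1 ∨ v i t = -1) ∧
      ∀ i j, i ≠ j → |∑ t, v i t * v j t| ≤ 3 * Real.logb 2 k := by
  set L := logb 2 k
  set d := ⌈4 * L⌉₊
  have hLd : 3 * L < d := by
    linarith [Nat.le_ceil (4 * L), logb_pos one_lt_two (by exact_mod_cast hk : (1 : ℝ) < k)]
  have hfar (u) (hu : u ∈ signVectors (Fin d)) :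
      (k - 1) * #{w ∈ signVectors (Fin d) | 3 * L < |u ⬝ᵥ w|} < #(signVectors (Fin d)) := by
    simpa [card_signVectors] using pred_mul_card_filter_three_logb_lt_abs_dotProduct_lt hu hk
      (by simpa using two_pow_ceil_four_mul_logb_lt (by omega : 0 < k))
  obtain ⟨S, hSU, hScard, hS⟩ := exists_subset_card_eq_pairwise_not
    (fun u w h => by rwa [dotProduct_comm]) (fun u hu => by
      rwa [dotProduct_self_of_mem_signVectors hu, Fintype.card_fin,
        abs_of_nonneg (Nat.cast_nonneg d)]) signVectors_nonempty hfar
  let e := S.equivFinOfCardEq hScard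
  refine ⟨fun i => e.symm i, fun i => mem_signVectors.mp (hSU (e.symm i).2), fun i j hij => ?_⟩
  exact not_lt.mp <| hS (e.symm i).2 (e.symm j).2 fun h => hij (e.symm.injective (Subtype.ext h))
end

section
/- Let N ≥ 1, R ≥ 1 and k ≥ 2, and let g, h : Fin R → Perm(Fin N) be two tuples of permutations of an N-element set. Suppose that for every word w = (w_1, …, w_k) ∈ (Fin R)^k the compositions agree: g_{w_k} ∘ ⋯ ∘ g_{w_1} = h_{w_k} ∘ ⋯ ∘ h_{w_1}. Then there exists a single permutation C of Fin N such that h_r = g_r ∘ C for every r ∈ Fin R. -/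
/-- For a tuple of permutations `g : Fin R → Perm (Fin N)` and a word
`w = (w_1, …, w_k) ∈ (Fin R)^k`, `wordComp g w` is the composition
`g_{w_k} ∘ ⋯ ∘ g_{w_1}` (with `g_{w_1}` applied first). -/
def wordComp {N R : ℕ} (g : Fin R → Equiv.Perm (Fin N)) {k : ℕ}
    (w : Fin k → Fin R) : Equiv.Perm (Fin N) :=
  (List.ofFn w).foldl (fun σ r => g r * σ) 1

lemma wordComp_snoc {N R : ℕ} (g : Fin R → Equiv.Perm (Fin N)) {k : ℕ}
    (w : Fin k → Fin R) (r : Fin R) :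
    wordComp g (Fin.snoc w r) = g r * wordComp g w := by
  have : List.ofFn (Fin.snoc w r : Fin (k+1) → Fin R) = List.ofFn w ++ [r] := by
    rw [List.ofFn_succ']
    simp [List.concat_eq_append, Fin.snoc]
  unfold wordComp
  rw [this, List.foldl_append]
  simp

/-- **Right-translation rigidity.** If two tuples of permutations
`g, h : Fin R → Perm (Fin N)` satisfy `g_{w_k} ∘ ⋯ ∘ g_{w_1} = h_{w_k} ∘ ⋯ ∘ h_{w_1}`
for every word `w ∈ (Fin R)^k` (with `k ≥ 2`), then there is a single
permutation `C` with `h_r = g_r ∘ C` for every `r`. -/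
theorem right_translation_rigidity (N R k : ℕ) (hN : 1 ≤ N) (hR : 1 ≤ R)
    (hk : 2 ≤ k) (g h : Fin R → Equiv.Perm (Fin N))
    (hgh : ∀ w : Fin k → Fin R, wordComp g w = wordComp h w) :
    ∃ C : Equiv.Perm (Fin N), ∀ r : Fin R, h r = g r * C := by
  obtain ⟨m, rfl⟩ : ∃ m, k = m + 1 := ⟨k - 1, by omega⟩
  have hR0 : (0 : ℕ) < R := hR
  set r0 : Fin R := ⟨0, hR0⟩
  set w0 : Fin m → Fin R := fun _ => r0
  refine ⟨wordComp g w0 * (wordComp h w0)⁻¹, fun r => ?_⟩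
  have := hgh (Fin.snoc w0 r)
  rw [wordComp_snoc, wordComp_snoc] at this
  rw [← mul_assoc, this]
  group
end

section
/- Let N ≥ 1, R ≥ 1 and k ≥ 2, and let Φ : (Perm(Fin N))^R → (Fin N × (Fin R)^k → Fin N) be the k-hop evaluation map defined by Φ(g)(s, w) = g_w(s). Then the image of Φ has cardinality at least (N!)^(R−1). -/
/-- The `k`-hop evaluation map `Φ`, sending a tuple of permutations `g` to the
function `(s, w) ↦ g_w(s)`. -/
def khopEval (N R k : ℕ) (g : Fin R → Equiv.Perm (Fin N)) :
    Fin N × (Fin k → Fin R) → Fin N :=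
  fun p => wordComp g p.2 p.1

/-- **Image of the k-hop evaluation map is large.** For `N, R ≥ 1` and `k ≥ 2`,
the image of `Φ` has cardinality at least `(N!)^(R−1)`. -/
theorem khopEval_image_card_ge (N R k : ℕ) (hN : 1 ≤ N) (hR : 1 ≤ R)
    (hk : 2 ≤ k) :
    Nat.factorial N ^ (R - 1) ≤ Nat.card (Set.range (khopEval N R k)) := by
  obtain ⟨m, rfl⟩ : ∃ m, k = m + 1 := ⟨k - 1, by omega⟩
  set r0 : Fin R := ⟨0, hR⟩ with hr0
  -- extend a tuple of R-1 permutations by putting identity at index 0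
  set ext : (Fin (R - 1) → Equiv.Perm (Fin N)) → (Fin R → Equiv.Perm (Fin N)) :=
    fun h r => if hr : (r : ℕ) = 0 then 1 else h ⟨(r : ℕ) - 1, by omega⟩ with hext
  have hext0 : ∀ h, ext h r0 = 1 := fun h => by simp [hext, hr0]
  -- key computation: word (r, r0, r0, ...) evaluates to g r when g r0 = 1
  have hfold : ∀ (g : Fin R → Equiv.Perm (Fin N)), g r0 = 1 → ∀ (n : ℕ)
      (σ : Equiv.Perm (Fin N)),
      (List.replicate n r0).foldl (fun σ r => g r * σ) σ = σ := by
    intro g hg n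
    induction n with
    | zero => intro σ; simp
    | succ n ih => intro σ; simp [List.replicate_succ, hg, ih]
  have key : ∀ (g : Fin R → Equiv.Perm (Fin N)), g r0 = 1 → ∀ r : Fin R,
      wordComp g (fun j : Fin (m + 1) => if j = 0 then r else r0) = g r := by
    intro g hg r
    unfold wordComp
    rw [List.ofFn_succ]
    have htail : (List.ofFn fun i : Fin m => if (i.succ : Fin (m+1)) = 0 then r else r0)
        = List.replicate m r0 := by
      simp [Fin.succ_ne_zero, List.ofFn_const]
    rw [List.foldl_cons, htail, hfold g hg, if_pos rfl, mul_one]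
  -- the injection
  set F : (Fin (R - 1) → Equiv.Perm (Fin N)) → Set.range (khopEval N R (m + 1)) :=
    fun h => ⟨khopEval N R (m + 1) (ext h), ⟨ext h, rfl⟩⟩ with hF
  have hinj : Function.Injective F := by
    intro h1 h2 heq
    have heq' : khopEval N R (m + 1) (ext h1) = khopEval N R (m + 1) (ext h2) := by
      simpa [hF, Subtype.ext_iff] using heq
    funext i
    have hi : (i : ℕ) + 1 < R := by omega
    set r : Fin R := ⟨(i : ℕ) + 1, hi⟩ with hr
    have : ext h1 r = ext h2 r := by
      apply Equiv.ext
      intro s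
      have := congrFun heq' (s, fun j : Fin (m + 1) => if j = 0 then r else r0)
      simpa [khopEval, key _ (hext0 h1), key _ (hext0 h2)] using this
    simpa [hext, hr] using this
  calc Nat.factorial N ^ (R - 1)
      = Nat.card (Fin (R - 1) → Equiv.Perm (Fin N)) := by
        simp [Nat.card_fun, Nat.card_eq_fintype_card, Fintype.card_perm]
    _ ≤ Nat.card (Set.range (khopEval N R (m + 1))) :=
        Nat.card_le_card_of_injective F hinj
end

section
/- Let N ≥ 1, R ≥ 1, k ≥ 2 and W, D ∈ ℕ. Suppose there is a map Ans : Fin (2^W) × (Fin N → Fin (2^D)) × (Fin R → Fin (2^D)) → (Fin N × (Fin R)^k → Fin N) such that for every tuple of permutations g : Fin R → Perm(Fin N) there exist parameters θ, subject embeddings E_s, and relation embeddings E_r with Ans(θ, E_s, E_r) = Φ(g). Then 2^(W + N·D + R·D) ≥ (N!)^(R−1); in particular W + N·D + R·D ≥ (R−1)·log₂(N!) ≥ (R−1)·N·log₂(N/e). -/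
lemma foldl_triv {N R : ℕ} (g : Fin R → Equiv.Perm (Fin N)) (z : Fin R)
    (hz : g z = 1) : ∀ (n : ℕ) (σ : Equiv.Perm (Fin N)),
    (List.replicate n z).foldl (fun σ r => g r * σ) σ = σ := by
  intro n
  induction n with
  | zero => intro σ; simp
  | succ m ih => intro σ; simp [List.replicate_succ, hz, ih]

lemma wordComp_pick {N R : ℕ} (g : Fin R → Equiv.Perm (Fin N)) {k : ℕ}
    (hk : 0 < k) (r z : Fin R) (hz : g z = 1) :
    wordComp g (fun i : Fin k => if (i : ℕ) = 0 then r else z) = g r := by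
  obtain ⟨k', rfl⟩ := Nat.exists_eq_succ_of_ne_zero hk.ne'
  unfold wordComp
  rw [List.ofFn_succ]
  have h1 : (fun i : Fin k' => if ((Fin.succ i : Fin (k' + 1)) : ℕ) = 0 then r else z)
      = fun _ => z := by
    funext i; simp [Fin.val_succ]
  simp only [Fin.val_zero, if_pos rfl, h1, List.ofFn_const, List.foldl_cons]
  rw [foldl_triv g z hz]
  simp

lemma pow_div_factorial_le_exp (x : ℝ) (hx : 0 ≤ x) (n : ℕ) :
    x ^ n / n.factorial ≤ Real.exp x := by
  calc x ^ n / n.factorial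
      ≤ ∑ i ∈ Finset.range (n + 1), x ^ i / i.factorial := by
        refine Finset.single_le_sum (f := fun i => x ^ i / (i.factorial : ℝ)) ?_ ?_
        · intro i _; positivity
        · simp
    _ ≤ Real.exp x := Real.sum_le_exp_of_nonneg hx _

/-- **Global storage bound (`B_global`).** Suppose an abstract model with `W`
bits of internal weights, `D` bits per subject embedding (for `N` subjects)
and `D` bits per relation embedding (for `R` relations) can, for every tuple
of permutations `g : Fin R → Perm (Fin N)`, realize the `k`-hop evaluation map
`Φ(g)` for some choice of parameters and embeddings.  Then
`2^(W + N·D + R·D) ≥ (N!)^(R−1)`; in particular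
`W + N·D + R·D ≥ (R−1)·log₂(N!) ≥ (R−1)·N·log₂(N/e)`. -/
theorem global_storage_bound (N R k W D : ℕ) (hN : 1 ≤ N) (hR : 1 ≤ R)
    (hk : 2 ≤ k)
    (Ans : Fin (2 ^ W) × (Fin N → Fin (2 ^ D)) × (Fin R → Fin (2 ^ D)) →
      (Fin N × (Fin k → Fin R) → Fin N))
    (hAns : ∀ g : Fin R → Equiv.Perm (Fin N),
      ∃ θ Es Er, Ans (θ, Es, Er) = khopEval N R k g) :
    Nat.factorial N ^ (R - 1) ≤ 2 ^ (W + N * D + R * D) ∧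
    ((R : ℝ) - 1) * Real.logb 2 (Nat.factorial N) ≤ (W + N * D + R * D : ℝ) ∧
    ((R : ℝ) - 1) * ((N : ℝ) * Real.logb 2 ((N : ℝ) / Real.exp 1)) ≤
      ((R : ℝ) - 1) * Real.logb 2 (Nat.factorial N) := by
  have hz : (0 : ℕ) < R := hR
  set z : Fin R := ⟨0, hz⟩ with hzdef
  -- extension of a tuple indexed by Fin (R-1) to Fin R, with g z = 1
  let ext : (Fin (R - 1) → Equiv.Perm (Fin N)) → (Fin R → Equiv.Perm (Fin N)) :=
    fun h r => if h0 : (r : ℕ) = 0 then 1 else h ⟨(r : ℕ) - 1, by omega⟩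
  have hextz : ∀ h, ext h z = 1 := fun h => by simp [ext, hzdef]
  have hextj : ∀ h (j : Fin (R - 1)), ext h ⟨(j : ℕ) + 1, by omega⟩ = h j := by
    intro h j
    simp [ext]
  -- the parameter map
  let F : (Fin (R - 1) → Equiv.Perm (Fin N)) →
      Fin (2 ^ W) × (Fin N → Fin (2 ^ D)) × (Fin R → Fin (2 ^ D)) :=
    fun h => ⟨(hAns (ext h)).choose, (hAns (ext h)).choose_spec.choose,
      (hAns (ext h)).choose_spec.choose_spec.choose⟩
  have hF : ∀ h, Ans (F h) = khopEval N R k (ext h) := fun h =>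
    (hAns (ext h)).choose_spec.choose_spec.choose_spec
  have Finj : Function.Injective F := by
    intro h1 h2 hFeq
    have heval : khopEval N R k (ext h1) = khopEval N R k (ext h2) := by
      rw [← hF h1, ← hF h2, hFeq]
    funext j
    have hrec : ∀ h : Fin (R - 1) → Equiv.Perm (Fin N), ∀ s : Fin N,
        khopEval N R k (ext h)
          (s, fun i : Fin k => if (i : ℕ) = 0 then ⟨(j : ℕ) + 1, by omega⟩ else z)
          = h j s := by
      intro h s
      show wordComp (ext h) _ s = _
      rw [wordComp_pick (ext h) (by omega) _ z (hextz h), hextj]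
    ext s
    have := congrFun heval
      (s, fun i : Fin k => if (i : ℕ) = 0 then ⟨(j : ℕ) + 1, by omega⟩ else z)
    rw [hrec h1 s, hrec h2 s] at this
    exact congrArg _ this
  have hcard := Fintype.card_le_of_injective F Finj
  have hcard1 : Fintype.card (Fin (R - 1) → Equiv.Perm (Fin N))
      = Nat.factorial N ^ (R - 1) := by
    simp [Fintype.card_perm]
  have hcard2 : Fintype.card
      (Fin (2 ^ W) × (Fin N → Fin (2 ^ D)) × (Fin R → Fin (2 ^ D)))
      = 2 ^ (W + N * D + R * D) := by
    simp only [Fintype.card_prod, Fintype.card_fun, Fintype.card_fin, ← pow_mul, ← pow_add]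
    ring_nf
  have hmain : Nat.factorial N ^ (R - 1) ≤ 2 ^ (W + N * D + R * D) := by
    rw [← hcard1, ← hcard2]; exact hcard
  refine ⟨hmain, ?_, ?_⟩
  · -- second inequality, via logb
    have hfac1 : (1 : ℝ) ≤ (Nat.factorial N : ℝ) := by
      exact_mod_cast Nat.one_le_iff_ne_zero.mpr N.factorial_ne_zero
    have hreal : ((Nat.factorial N : ℝ)) ^ (R - 1) ≤ (2 : ℝ) ^ (W + N * D + R * D) := by
      exact_mod_cast hmain
    have hlog2 : Real.logb 2 ((Nat.factorial N : ℝ) ^ (R - 1))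
        ≤ Real.logb 2 ((2 : ℝ) ^ (W + N * D + R * D)) :=
      Real.logb_le_logb_of_le (by norm_num) (by positivity) hreal
    rw [Real.logb_pow, Real.logb_pow, Real.logb_self_eq_one (by norm_num),
      mul_one] at hlog2
    have hcast : ((R : ℝ) - 1) = ((R - 1 : ℕ) : ℝ) := by
      rw [Nat.cast_sub hR]; norm_num
    rw [hcast]
    calc ((R - 1 : ℕ) : ℝ) * Real.logb 2 (Nat.factorial N)
        ≤ ((W + N * D + R * D : ℕ) : ℝ) := hlog2
      _ = (W + N * D + R * D : ℝ) := by push_cast; ring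
  · -- third inequality
    apply mul_le_mul_of_nonneg_left _ (by simp; exact_mod_cast hR)
    have hNpos : (0 : ℝ) < N := by exact_mod_cast hN
    have hkey : ((N : ℝ) / Real.exp 1) ^ N ≤ (Nat.factorial N : ℝ) := by
      have h1 := pow_div_factorial_le_exp (N : ℝ) hNpos.le N
      have hfpos : (0 : ℝ) < (Nat.factorial N : ℝ) := by
        exact_mod_cast N.factorial_pos
      rw [div_le_iff₀ hfpos] at h1
      rw [← Real.exp_one_pow] at h1
      rw [div_pow, div_le_iff₀ (by positivity)]
      nlinarith [h1]
    calc (N : ℝ) * Real.logb 2 ((N : ℝ) / Real.exp 1)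
        = Real.logb 2 (((N : ℝ) / Real.exp 1) ^ N) := by rw [Real.logb_pow]
      _ ≤ Real.logb 2 (Nat.factorial N) :=
          Real.logb_le_logb_of_le (by norm_num) (by positivity) hkey
end

section
/- Let N ≥ 1, R ≥ 1, k ≥ 1 and let g : Fin R → Perm(Fin N) be a tuple of permutations. For v ∈ Fin N let L(v) = { g_w(v) : w ∈ (Fin R)^k } be the set of endpoints of all length-k relation paths starting at v. Then there exists a subset S ⊆ Fin N with |S| ≥ ⌊N / (2·R^(2k))⌋ such that the sets L(u), u ∈ S, are pairwise disjoint. -/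
open Finset

section Greedy

variable {α β : Type*} [Fintype α] [DecidableEq α] [DecidableEq β]

theorem exists_subset_pairwiseDisjoint_of_card_conflicts_le (L : α → Finset β) (D : ℕ)
    (hne : ∀ v, (L v).Nonempty)
    (hconf : ∀ v, #{u | ¬Disjoint (L u) (L v)} ≤ D) (T : Finset α) :
    ∃ S ⊆ T, #T ≤ #S * D ∧ (S : Set α).PairwiseDisjoint L := by
  induction T using Finset.strongInduction with
  | H T ih =>
  rcases T.eq_empty_or_nonempty with rfl | ⟨v, hv⟩
  · exact ⟨∅, subset_rfl, by simp, by simp⟩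
  set C := T.filter fun u => ¬Disjoint (L u) (L v)
  have hvC : v ∈ C := mem_filter.2 ⟨hv, by simpa using (hne v).ne_empty⟩
  have hCT : C ⊆ T := filter_subset _ _
  have hC : #C ≤ D :=
    (card_le_card (monotone_filter_left _ (subset_univ T))).trans (hconf v)
  obtain ⟨S, hST, hcard, hS⟩ := ih (T \ C) (sdiff_ssubset hCT ⟨v, hvC⟩)
  have hvS : v ∉ S := fun h => (mem_sdiff.1 (hST h)).2 hvC
  have hdisj : ∀ u ∈ S, Disjoint (L u) (L v) := fun u hu => by
    by_contra h
    exact (mem_sdiff.1 (hST hu)).2 (mem_filter.2 ⟨(mem_sdiff.1 (hST hu)).1, h⟩)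
  refine ⟨insert v S, ?_, ?_, ?_⟩
  · exact insert_subset hv (hST.trans sdiff_subset)
  · have := card_sdiff_add_card_eq_card hCT
    rw [card_insert_of_notMem hvS, add_one_mul]
    omega
  · rw [coe_insert]
    exact hS.insert fun u hu _ => (hdisj u hu).symm

end Greedy

section Leaves

variable {N R k : ℕ} (g : Fin R → Equiv.Perm (Fin N))

def wordLeaves (k : ℕ) (v : Fin N) : Finset (Fin N) :=
  univ.image fun w : Fin k → Fin R => wordComp g w v

theorem wordLeaves_nonempty (hR : 1 ≤ R) (v : Fin N) : (wordLeaves g k v).Nonempty :=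
  image_nonempty.2 ⟨fun _ => ⟨0, hR⟩, mem_univ _⟩

theorem card_not_disjoint_wordLeaves_le (v : Fin N) :
    #{u | ¬Disjoint (wordLeaves g k u) (wordLeaves g k v)} ≤ R ^ (2 * k) := by
  have hsub : ({u | ¬Disjoint (wordLeaves g k u) (wordLeaves g k v)} : Finset (Fin N)) ⊆
      univ.image fun p : (Fin k → Fin R) × (Fin k → Fin R) =>
        (wordComp g p.1).symm (wordComp g p.2 v) := by
    intro u hu
    obtain ⟨x, hxu, hxv⟩ := not_disjoint_iff.1 (mem_filter.1 hu).2
    obtain ⟨w, -, rfl⟩ := mem_image.1 hxu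
    obtain ⟨w', -, hw'⟩ := mem_image.1 hxv
    exact mem_image.2 ⟨(w, w'), mem_univ _, by simp [hw']⟩
  calc _ ≤ _ := card_le_card hsub
    _ ≤ #(univ : Finset ((Fin k → Fin R) × (Fin k → Fin R))) := card_image_le
    _ = R ^ (2 * k) := by simp [two_mul, pow_add]

end Leaves

theorem disjoint_khop_trees_general (N R k : ℕ) (hR : 1 ≤ R)
    (g : Fin R → Equiv.Perm (Fin N)) :
    ∃ S : Finset (Fin N), N / (2 * R ^ (2 * k)) ≤ S.card ∧
      ∀ u ∈ S, ∀ u' ∈ S, u ≠ u' →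
        Disjoint
          (Finset.image (fun w : Fin k → Fin R => wordComp g w u) Finset.univ)
          (Finset.image (fun w : Fin k → Fin R => wordComp g w u') Finset.univ) := by
  obtain ⟨S, -, hcard, hS⟩ := exists_subset_pairwiseDisjoint_of_card_conflicts_le
    (wordLeaves g k) _ (wordLeaves_nonempty g hR) (card_not_disjoint_wordLeaves_le g) univ
  refine ⟨S, ?_, fun u hu u' hu' hne => hS hu hu' hne⟩
  rw [card_univ, Fintype.card_fin] at hcard
  calc N / (2 * R ^ (2 * k)) ≤ N / R ^ (2 * k) := Nat.div_le_div_left (by omega) (by positivity)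
    _ ≤ #S := Nat.div_le_of_le_mul (hcard.trans_eq (mul_comm _ _))

/-- **Greedy extraction of disjoint evaluation trees.** For `N, R ≥ 1`,
`k ≥ 1` and any tuple of permutations `g : Fin R → Perm (Fin N)`, letting
`L v = { g_w(v) : w ∈ (Fin R)^k }` be the endpoints of all length-`k` relation
paths from `v`, there is a subset `S` of the vertices with
`|S| ≥ ⌊N / (2·R^(2k))⌋` whose evaluation-leaf sets `L u`, `u ∈ S`, are
pairwise disjoint. -/
theorem disjoint_khop_trees (N R k : ℕ) (hN : 1 ≤ N) (hR : 1 ≤ R) (hk : 1 ≤ k)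
    (g : Fin R → Equiv.Perm (Fin N)) :
    ∃ S : Finset (Fin N), N / (2 * R ^ (2 * k)) ≤ S.card ∧
      ∀ u ∈ S, ∀ u' ∈ S, u ≠ u' →
        Disjoint
          (Finset.image (fun w : Fin k → Fin R => wordComp g w u) Finset.univ)
          (Finset.image (fun w : Fin k → Fin R => wordComp g w u') Finset.univ) :=
  disjoint_khop_trees_general N R k hR g
end

section
/- Let N, R, k, p be natural numbers with R ≥ 2, k ≥ 1, p ≥ 1 and 4·p·R^k ≤ N, and fix p distinct vertices v_1, …, v_p ∈ Fin N. Then the number of distinct functions F : Fin p × (Fin R)^k → Fin N that arise as F(i, w) = g_w(v_i) for some tuple of permutations g : Fin R → Perm(Fin N) is at least (N/2)^(p·R^k). -/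
open Function Set

theorem Equiv.Perm.exists_apply_eq_of_injective {X A : Type*} [Finite X] {c d : A → X}
    (hc : Injective c) (hd : Injective d) : ∃ σ : Equiv.Perm X, ∀ a, σ (c a) = d a := by
  classical
  let e := (Equiv.ofInjective c hc).symm.trans (Equiv.ofInjective d hd)
  refine ⟨e.extendSubtype, fun a => ?_⟩
  rw [e.extendSubtype_apply_of_mem (c a) ⟨a, rfl⟩]
  simp [e, Equiv.ofInjective_symm_apply]

theorem exists_injOn_comp_eq {α ι X : Type*} [Finite X] [Nonempty X] {s : Set α}
    (hs : s.Finite) (hsX : s.ncard ≤ Nat.card X) {r : ι → α} (hr : Injective r)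
    (hrs : ∀ i, r i ∈ s) {v : ι → X} (hv : Injective v) :
    ∃ c : α → X, InjOn c s ∧ c ∘ r = v := by
  obtain ⟨f, -, hf⟩ := hs.exists_injOn_of_encard_le (t := univ) (by
    rw [← hs.cast_ncard_eq, encard_univ, ENat.card_eq_coe_natCard X]
    exact_mod_cast hsX)
  obtain ⟨σ, hσ⟩ := Equiv.Perm.exists_apply_eq_of_injective
    ((hf.injective_iff s (range_subset_iff.mpr hrs)).mpr hr) hv
  exact ⟨σ ∘ f, σ.injective.comp_injOn hf, funext hσ⟩

theorem List.exists_ofFn_eq {α : Type*} {l : List α} {k : ℕ} (h : l.length = k) :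
    ∃ w : Fin k → α, List.ofFn w = l := by
  subst h
  exact ⟨l.get, List.ofFn_get l⟩

theorem setOf_length_lt_eq_univ_prod {ι β : Type*} (k : ℕ) :
    {x : ι × List β | x.2.length < k} = univ ×ˢ {l | l.length < k} := by
  ext; simp

theorem finite_setOf_length_lt {ι β : Type*} [Finite ι] [Finite β] (k : ℕ) :
    {x : ι × List β | x.2.length < k}.Finite := by
  rw [setOf_length_lt_eq_univ_prod]
  exact finite_univ.prod (List.finite_length_lt β k)

theorem ncard_setOf_length_lt_le {ι β : Type*} [Finite ι] [Finite β] (hβ : 2 ≤ Nat.card β)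
    (k : ℕ) : {x : ι × List β | x.2.length < k}.ncard ≤ Nat.card ι * Nat.card β ^ k := by
  have hwords : {l : List β | l.length < k} ⊆
      range (fun x : (j : Fin k) × (Fin j → β) => List.ofFn x.2) :=
    fun l hl => ⟨⟨⟨l.length, hl⟩, l.get⟩, List.ofFn_get l⟩
  have hcard : {l : List β | l.length < k}.ncard ≤ Nat.card β ^ k :=
    calc _ ≤ (range _).ncard := ncard_le_ncard hwords (finite_range _)
      _ ≤ Nat.card ((j : Fin k) × (Fin j → β)) := Finite.card_range_le _
      _ = ∑ j ∈ Finset.range k, Nat.card β ^ j := by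
        simp only [Nat.card_sigma, Nat.card_fun, Nat.card_eq_fintype_card (α := Fin _),
          Fintype.card_fin]
        exact Fin.sum_univ_eq_sum_range (fun j => Nat.card β ^ j) k
      _ ≤ Nat.card β ^ k := (Nat.geomSum_lt hβ fun j hj => Finset.mem_range.mp hj).le
  rw [setOf_length_lt_eq_univ_prod, ncard_prod, ncard_univ]
  exact Nat.mul_le_mul_left _ hcard

theorem exists_perms_foldl_eq {X ι β : Type*} [Finite X] (k : ℕ) (lab : ι × List β → X)
    (hlab : InjOn lab {x | x.2.length ≤ k}) :
    ∃ g : β → Equiv.Perm X, ∀ i l, l.length ≤ k →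
      l.foldl (fun σ r => g r * σ) 1 (lab (i, [])) = lab (i, l) := by
  have hstep : ∀ r : β, ∃ σ : Equiv.Perm X,
      ∀ x : {x : ι × List β // x.2.length < k}, σ (lab x) = lab (x.1.1, x.1.2 ++ [r]) := by
    intro r
    refine Equiv.Perm.exists_apply_eq_of_injective (fun x y hxy => ?_) (fun x y hxy => ?_)
    · exact Subtype.ext (hlab (le_of_lt x.2) (le_of_lt y.2) hxy)
    · have h := hlab (x₁ := (x.1.1, x.1.2 ++ [r])) (x₂ := (y.1.1, y.1.2 ++ [r]))
        (by simpa using x.2) (by simpa using y.2) hxy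
      simp only [Prod.mk.injEq, List.append_cancel_right_eq] at h
      exact Subtype.ext (Prod.ext h.1 h.2)
  choose g hg using hstep
  refine ⟨g, fun i l => ?_⟩
  induction l using List.reverseRecOn with
  | nil => simp
  | append_singleton l r ih =>
    intro hl
    have hlk : l.length < k := by simpa using hl
    rw [List.foldl_append, List.foldl_cons, List.foldl_nil, Equiv.Perm.mul_apply, ih hlk.le]
    exact hg r ⟨(i, l), hlk⟩

theorem exists_wordComp_of_embedding {N R k : ℕ} {ι : Type*} (hk : 1 ≤ k) {v : ι → Fin N}
    {c : ι × List (Fin R) → Fin N} (hc : InjOn c {x | x.2.length < k})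
    (hroot : ∀ i, c (i, []) = v i)
    (e : ι × (Fin k → Fin R) ↪ ↥(c '' {x | x.2.length < k})ᶜ) :
    ∃ g : Fin R → Equiv.Perm (Fin N), ∀ q, wordComp g q.2 (v q.1) = e q := by
  let leaf : ι × (Fin k → Fin R) → ι × List (Fin R) := fun q => (q.1, List.ofFn q.2)
  have hleaf : Injective leaf := injective_id.prodMap List.ofFn_injective
  let lab := extend leaf (fun q => (e q : Fin N)) c
  have lab_leaf (q) : lab (leaf q) = e q := hleaf.extend_apply _ _ q
  have lab_internal : EqOn lab c {x | x.2.length < k} := by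
    rintro x hx
    refine extend_apply' _ _ _ ?_
    rintro ⟨q, rfl⟩
    simp [leaf] at hx
  have hlab : InjOn lab {x | x.2.length ≤ k} := by
    have hnodes : {x : ι × List (Fin R) | x.2.length ≤ k} ⊆
        {x | x.2.length < k} ∪ range leaf := by
      rintro ⟨i, l⟩ hl
      rcases (show l.length ≤ k from hl).lt_or_eq with hlt | heq
      · exact Or.inl hlt
      · obtain ⟨w, rfl⟩ := List.exists_ofFn_eq heq
        exact Or.inr ⟨(i, w), rfl⟩
    have hdisj : Disjoint {x : ι × List (Fin R) | x.2.length < k} (range leaf) := by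
      rw [Set.disjoint_right]
      rintro _ ⟨q, rfl⟩
      simp [leaf]
    refine InjOn.mono hnodes ((injOn_union hdisj).mpr ⟨hc.congr lab_internal.symm, ?_, ?_⟩)
    · refine Injective.injOn_range fun q q' h => e.injective (Subtype.ext ?_)
      simpa only [comp_apply, lab_leaf] using h
    · rintro x hx _ ⟨q, rfl⟩ h
      rw [lab_internal hx, lab_leaf] at h
      exact (e q).2 (h ▸ mem_image_of_mem c hx)
  obtain ⟨g, hg⟩ := exists_perms_foldl_eq k lab hlab
  refine ⟨g, fun q => ?_⟩
  have hroot' : lab (q.1, []) = v q.1 := by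
    rw [lab_internal (show ([] : List (Fin R)).length < k from hk), hroot]
  rw [← lab_leaf, ← hroot']
  exact hg q.1 (List.ofFn q.2) (by simp)

theorem descFactorial_le_card_range_wordComp {N R k : ℕ} {ι : Type*} [Fintype ι] (hk : 1 ≤ k)
    {v : ι → Fin N} {c : ι × List (Fin R) → Fin N} (hc : InjOn c {x | x.2.length < k})
    (hroot : ∀ i, c (i, []) = v i) :
    (c '' {x | x.2.length < k})ᶜ.ncard.descFactorial (Fintype.card ι * R ^ k) ≤
      Nat.card (Set.range (fun g : Fin R → Equiv.Perm (Fin N) =>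
        fun q : ι × (Fin k → Fin R) => wordComp g q.2 (v q.1))) := by
  classical
  let realize (e : ι × (Fin k → Fin R) ↪ ↥(c '' {x | x.2.length < k})ᶜ) :
      Set.range (fun g : Fin R → Equiv.Perm (Fin N) =>
        fun q : ι × (Fin k → Fin R) => wordComp g q.2 (v q.1)) :=
    ⟨fun q => e q, (exists_wordComp_of_embedding hk hc hroot e).imp fun _ => funext⟩
  have hrealize : Injective realize := fun e e' h =>
    DFunLike.ext _ _ fun q => Subtype.ext (congrFun (congrArg Subtype.val h) q)
  calc _ = Nat.card (ι × (Fin k → Fin R) ↪ ↥(c '' {x | x.2.length < k})ᶜ) := by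
        rw [← Nat.card_coe_set_eq, Nat.card_eq_fintype_card, Nat.card_eq_fintype_card,
          Fintype.card_embedding_eq]
        simp
    _ ≤ _ := Nat.card_le_card_of_injective realize hrealize

theorem half_pow_le_descFactorial {N n M : ℕ} (hM : 4 * M ≤ N) (hn : N ≤ n + M) :
    ((N : ℝ) / 2) ^ M ≤ n.descFactorial M := by
  have hhalf : (N : ℝ) / 2 ≤ ((n + 1 - M : ℕ) : ℝ) := by
    rw [div_le_iff₀ two_pos]
    exact_mod_cast (by omega : N ≤ (n + 1 - M) * 2)
  calc ((N : ℝ) / 2) ^ M ≤ ((n + 1 - M : ℕ) : ℝ) ^ M := by gcongr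
    _ ≤ n.descFactorial M := by exact_mod_cast Nat.pow_sub_le_descFactorial n M

/-- **Counting assignments to disjoint evaluation trees.** Let `R ≥ 2`,
`k ≥ 1`, `p ≥ 1` with `4·p·R^k ≤ N`, and fix `p` distinct vertices
`v 1, …, v p ∈ Fin N`.  Then the number of distinct functions
`F : Fin p × (Fin R)^k → Fin N` of the form `F(i, w) = g_w(v i)` for some
tuple of permutations `g` is at least `(N/2)^(p·R^k)`. -/
theorem tree_assignment_count (N R k p : ℕ) (hR : 2 ≤ R) (hk : 1 ≤ k)
    (hp : 1 ≤ p) (hN : 4 * p * R ^ k ≤ N) (v : Fin p → Fin N)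
    (hv : Function.Injective v) :
    ((N : ℝ) / 2) ^ (p * R ^ k) ≤
      Nat.card (Set.range (fun g : Fin R → Equiv.Perm (Fin N) =>
        fun q : Fin p × (Fin k → Fin R) => wordComp g q.2 (v q.1))) := by
  have hfin := finite_setOf_length_lt (ι := Fin p) (β := Fin R) k
  have hI : {x : Fin p × List (Fin R) | x.2.length < k}.ncard ≤ p * R ^ k := by
    simpa using ncard_setOf_length_lt_le (ι := Fin p) (β := Fin R) (by simpa) k
  have hpN : p * R ^ k ≤ N := by rw [mul_assoc] at hN; omega
  have : Nonempty (Fin N) := ⟨v ⟨0, hp⟩⟩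
  obtain ⟨c, hc, hroot⟩ := exists_injOn_comp_eq hfin (by simpa using hI.trans hpN)
    (r := fun i => (i, [])) (fun i j h => (Prod.mk.inj h).1) (fun _ => hk) hv
  have hcompl : N ≤ (c '' {x | x.2.length < k})ᶜ.ncard + p * R ^ k := by
    have hsum := ncard_add_ncard_compl (c '' {x : Fin p × List (Fin R) | x.2.length < k})
    rw [Nat.card_fin] at hsum
    have hS := (ncard_image_le (f := c) hfin).trans hI
    omega
  calc ((N : ℝ) / 2) ^ (p * R ^ k)
      ≤ (c '' {x | x.2.length < k})ᶜ.ncard.descFactorial (p * R ^ k) :=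
        half_pow_le_descFactorial (by linarith) hcompl
    _ ≤ _ := by
        simpa using descFactorial_le_card_range_wordComp hk hc (congrFun hroot)
end

section
/- Let R ≥ 1, m ≥ 1, let u_1, …, u_R ∈ {−1,1}^m be vectors with entries in {−1,1}, and let j ∈ {1, …, R}. Then Σ_{ℓ=1}^{R} [ ReLU(u_ℓ − 2·|j−ℓ|·𝟙) − ReLU(−u_ℓ − 2·|j−ℓ|·𝟙) ] = u_j, where 𝟙 ∈ ℝ^m is the all-ones vector, |j−ℓ| is the absolute difference of the indices, and ReLU is applied componentwise. -/
/-- **Relation-conditioned ReLU selector.** Let `R, m ≥ 1`, let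
`u 1, …, u R ∈ {−1,1}^m` and let `j ∈ Fin R`.  Then componentwise
`Σ_ℓ [ ReLU(u_ℓ − 2·|j−ℓ|·𝟙) − ReLU(−u_ℓ − 2·|j−ℓ|·𝟙) ] = u_j`. -/
theorem relu_selector (R m : ℕ) (hR : 1 ≤ R) (hm : 1 ≤ m)
    (u : Fin R → Fin m → ℝ) (hu : ∀ ℓ t, u ℓ t = 1 ∨ u ℓ t = -1) (j : Fin R) :
    ∀ t : Fin m,
      ∑ ℓ : Fin R,
        (max (u ℓ t - 2 * |(j : ℝ) - (ℓ : ℝ)|) 0 -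
          max (-(u ℓ t) - 2 * |(j : ℝ) - (ℓ : ℝ)|) 0) = u j t := by
  intro t
  rw [Finset.sum_eq_single j]
  · have : |(j : ℝ) - (j : ℝ)| = 0 := by simp
    rw [this]
    rcases hu j t with h | h <;> rw [h] <;> norm_num
  · intro ℓ _ hne
    have habs : (1 : ℝ) ≤ |(j : ℝ) - (ℓ : ℝ)| := by
      have : (j : ℤ) ≠ (ℓ : ℤ) := by
        simpa [Fin.val_inj] using hne.symm
      have h1 : (1 : ℤ) ≤ |(j : ℤ) - (ℓ : ℤ)| := Int.one_le_abs (sub_ne_zero.mpr this)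
      have : ((1 : ℤ) : ℝ) ≤ (|(j : ℤ) - (ℓ : ℤ)| : ℝ) := by exact_mod_cast h1
      simpa [abs_sub_comm] using this
    have h1 : u ℓ t - 2 * |(j : ℝ) - (ℓ : ℝ)| ≤ 0 := by
      rcases hu ℓ t with h | h <;> rw [h] <;> nlinarith
    have h2 : -(u ℓ t) - 2 * |(j : ℝ) - (ℓ : ℝ)| ≤ 0 := by
      rcases hu ℓ t with h | h <;> rw [h] <;> nlinarith
    rw [max_eq_right h1, max_eq_right h2]; ring
  · intro h; exact absurd (Finset.mem_univ j) h
end
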